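/- Let q ∈ ℂ with 0 < |q| < 1. Then Σ_{n≥0} Σ_{j=0}^{n} (-1)^j q^{2n²+2n+j²+j} / ((-q;q)_{2n+1} · (q²;q²)_{n-j} · (q²;q²)_j · (1 - q^{2j+1})) = F₂(q²), where F₂(x) = Σ_{n≥0} x^{n²+n} / (x^{n+1};x)_{n+1}. -/

import Mathlib

/-- Finite q-Pochhammer symbol `(x;q)_n = ∏_{i=0}^{n-1} (1 - x q^i)`. -/
noncomputable def qPoch (x q : ℂ) (n : ℕ) : ℂ :=
  ∏ i ∈ Finset.range n, (1 - x * q ^ i)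

/-- The second-order mock theta function `F₂(x) = Σ_{n≥0} x^{n²+n}/(x^{n+1};x)_{n+1}`. -/
noncomputable def mockF2 (x : ℂ) : ℂ :=
  ∑' n : ℕ, x ^ (n ^ 2 + n) / qPoch (x ^ (n + 1)) x (n + 1)

/-!
The identity holds summand by summand in `n`. Put `p = q²`. The inner sum over `j` is the
partial-fraction expansion of `1 / (q; p)_{n+1}`: multiplying the expansion of `1 / (z; p)_{n+2}` by
`1 - z p^{n+1}` gives that of `1 / (z; p)_{n+1}` plus `p^{n+1}` times
`Σ_j (-1)^j p^{j(j-1)/2} / ((p; p)_{n+1-j} (p; p)_j)`, which is `(1; p)_{n+1} / (p; p)_{n+1} = 0` by the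
q-binomial theorem. Finally `(-q; q)_{2n+1} (q; q²)_{n+1} (q²; q²)_n = (-q; q)_{2n+1} (q; q)_{2n+1}
= (q²; q²)_{2n+1}`, so the `n`-th summand is `x^{n²+n} / (x^{n+1}; x)_{n+1}` at `x = q²`.
-/

open Finset

theorem qPoch_zero (x q : ℂ) : qPoch x q 0 = 1 := prod_range_zero _

theorem qPoch_succ (x q : ℂ) (n : ℕ) : qPoch x q (n + 1) = qPoch x q n * (1 - x * q ^ n) :=
  prod_range_succ _ _

theorem qPoch_add (x q : ℂ) (m k : ℕ) :
    qPoch x q (m + k) = qPoch x q m * qPoch (x * q ^ m) q k := by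
  simp only [qPoch, prod_range_add, pow_add, mul_assoc]

theorem qPoch_succ' (x q : ℂ) (n : ℕ) : qPoch x q (n + 1) = (1 - x) * qPoch (x * q) q n := by
  rw [add_comm, qPoch_add, pow_one, qPoch_succ, qPoch_zero, pow_zero, mul_one, one_mul]

theorem qPoch_ne_zero_of_le {x q : ℂ} {m n : ℕ} (h : qPoch x q n ≠ 0) (hmn : m ≤ n) :
    qPoch x q m ≠ 0 := by
  obtain ⟨k, rfl⟩ := Nat.exists_eq_add_of_le hmn
  exact left_ne_zero_of_mul (qPoch_add x q m k ▸ h)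

theorem one_sub_mul_pow_ne_zero_of_qPoch {x q : ℂ} {j n : ℕ} (h : qPoch x q n ≠ 0) (hj : j < n) :
    1 - x * q ^ j ≠ 0 :=
  prod_ne_zero_iff.mp h j (mem_range.mpr hj)

theorem qPoch_ne_zero {x q : ℂ} (hx : ‖x‖ < 1) (hq : ‖q‖ ≤ 1) (n : ℕ) : qPoch x q n ≠ 0 := by
  refine prod_ne_zero_iff.mpr fun i _ => sub_ne_zero.mpr fun h => ?_
  have : ‖x * q ^ i‖ < 1 := by
    rw [norm_mul, norm_pow]
    exact mul_lt_one_of_nonneg_of_lt_one_left (norm_nonneg _) hx (pow_le_one₀ (norm_nonneg _) hq)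
  rw [← h, norm_one] at this
  exact lt_irrefl _ this

theorem qPoch_neg_mul_qPoch (x q : ℂ) (m : ℕ) :
    qPoch (-x) q m * qPoch x q m = qPoch (x ^ 2) (q ^ 2) m := by
  rw [qPoch, qPoch, qPoch, ← prod_mul_distrib]
  exact prod_congr rfl fun i _ => by ring

theorem qPoch_two_mul_add_one (x q : ℂ) (m : ℕ) :
    qPoch x q (2 * m + 1) = qPoch x (q ^ 2) (m + 1) * qPoch (x * q) (q ^ 2) m := by
  induction m with
  | zero => simp [qPoch_succ, qPoch_zero]
  | succ m ih =>
    rw [show 2 * (m + 1) + 1 = 2 * m + 1 + 1 + 1 by ring, qPoch_succ, qPoch_succ, ih,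
      qPoch_succ x _ (m + 1), qPoch_succ (x * q)]
    ring

theorem pow_choose_two_succ {M : Type*} [Monoid M] (p : M) (j : ℕ) :
    p ^ (j + 1).choose 2 = p ^ j.choose 2 * p ^ j := by
  rw [Nat.choose_succ_succ', Nat.choose_one_right, add_comm, pow_add]

theorem two_mul_choose_two_succ (j : ℕ) : 2 * (j + 1).choose 2 = j ^ 2 + j := by
  have := Nat.add_one_mul_choose_eq j 1
  rw [Nat.choose_one_right] at this
  linarith

noncomputable def qBinom (p : ℂ) : ℕ → ℕ → ℂ
  | _, 0 => 1
  | 0, _ + 1 => 0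
  | n + 1, k + 1 => p ^ (k + 1) * qBinom p n (k + 1) + qBinom p n k

theorem qBinom_zero_right (p : ℂ) (n : ℕ) : qBinom p n 0 = 1 := by cases n <;> rfl

theorem qBinom_succ_succ (p : ℂ) (n k : ℕ) :
    qBinom p (n + 1) (k + 1) = p ^ (k + 1) * qBinom p n (k + 1) + qBinom p n k := rfl

theorem qBinom_of_lt (p : ℂ) {n k : ℕ} (h : n < k) : qBinom p n k = 0 := by
  induction n generalizing k with
  | zero => obtain ⟨k, rfl⟩ := Nat.exists_eq_succ_of_ne_zero h.ne'; rfl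
  | succ n ih =>
    obtain ⟨k, rfl⟩ := Nat.exists_eq_succ_of_ne_zero (Nat.ne_zero_of_lt h)
    rw [qBinom_succ_succ, ih (by omega), ih (by omega), mul_zero, add_zero]

theorem qPoch_mul_qPoch_mul_qBinom (p : ℂ) (k j : ℕ) :
    qPoch p p k * qPoch p p j * qBinom p (k + j) j = qPoch p p (k + j) := by
  induction j generalizing k with
  | zero => simp [qBinom_zero_right, qPoch_zero]
  | succ j ihj =>
    induction k with
    | zero =>
      have h := ihj 0
      simp only [zero_add, qPoch_zero, one_mul] at h ⊢
      rw [qBinom_succ_succ, qBinom_of_lt p (lt_add_one j), qPoch_succ]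
      linear_combination (1 - p * p ^ j) * h
    | succ k ihk =>
      have h := ihj (k + 1)
      rw [show k + (j + 1) = k + j + 1 by omega] at ihk
      rw [show k + 1 + j = k + j + 1 by omega] at h
      rw [show k + 1 + (j + 1) = k + j + 1 + 1 by omega, qBinom_succ_succ, qPoch_succ p p (k + j + 1)]
      rw [qPoch_succ p p k] at h ⊢
      rw [qPoch_succ p p j] at ihk ⊢
      linear_combination (1 - p * p ^ k) * p ^ (j + 1) * ihk + (1 - p * p ^ j) * h

theorem sum_qBinom_mul_pow (p : ℂ) (n : ℕ) (x : ℂ) :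
    ∑ j ∈ range (n + 1), (-1) ^ j * p ^ j.choose 2 * qBinom p n j * x ^ j = qPoch x p n := by
  induction n generalizing x with
  | zero => simp [qBinom_zero_right, qPoch_zero]
  | succ n ih =>
    let g : ℕ → ℂ := fun j => (-1) ^ j * p ^ j.choose 2 * qBinom p n j * (x * p) ^ j
    have hg_sum : ∑ j ∈ range (n + 1), g j = qPoch (x * p) p n := ih _
    have hg_zero : g 0 = 1 := by simp [g, qBinom_zero_right]
    have hg_shift : ∑ j ∈ range (n + 1), g (j + 1) + g 0 = ∑ j ∈ range (n + 1), g j := by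
      rw [← sum_range_succ', sum_range_succ, add_eq_left]
      simp only [g, qBinom_of_lt p (lt_add_one n), mul_zero, zero_mul]
    have hterm : ∀ j ∈ range (n + 1), (-1) ^ (j + 1) * p ^ (j + 1).choose 2 *
        qBinom p (n + 1) (j + 1) * x ^ (j + 1) = g (j + 1) - x * g j := by
      intro j _
      simp only [g, qBinom_succ_succ, pow_choose_two_succ]
      ring
    rw [sum_range_succ', sum_congr rfl hterm, sum_sub_distrib, ← mul_sum, qPoch_succ', ← hg_sum]
    simp only [qBinom_zero_right, Nat.choose_zero_succ, pow_zero, mul_one]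
    linear_combination hg_shift - hg_zero

theorem sum_div_qPoch_mul_qPoch (p x : ℂ) {n : ℕ} (hp : qPoch p p n ≠ 0) :
    ∑ j ∈ range (n + 1), (-1) ^ j * p ^ j.choose 2 * x ^ j / (qPoch p p (n - j) * qPoch p p j) =
      qPoch x p n / qPoch p p n := by
  rw [← sum_qBinom_mul_pow, sum_div]
  refine sum_congr rfl fun j hj => ?_
  obtain ⟨k, rfl⟩ : ∃ k, n = k + j := ⟨n - j, by have := mem_range.mp hj; omega⟩
  rw [Nat.add_sub_cancel, div_eq_div_iff (mul_ne_zero (qPoch_ne_zero_of_le hp (by omega))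
    (qPoch_ne_zero_of_le hp (by omega))) hp]
  linear_combination (-((-1) ^ j * p ^ j.choose 2 * x ^ j)) * qPoch_mul_qPoch_mul_qBinom p k j

noncomputable def partialFractionSum (p z : ℂ) (n : ℕ) : ℂ :=
  ∑ j ∈ range (n + 1), (-1) ^ j * p ^ (j + 1).choose 2 /
    (qPoch p p (n - j) * qPoch p p j * (1 - z * p ^ j))

theorem one_sub_mul_partialFractionSum_succ (p z : ℂ) {n : ℕ} (hp : qPoch p p (n + 1) ≠ 0)
    (hz : qPoch z p (n + 2) ≠ 0) :
    (1 - z * p ^ (n + 1)) * partialFractionSum p z (n + 1) = partialFractionSum p z n := by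
  have hvanish := sum_div_qPoch_mul_qPoch p 1 hp
  rw [qPoch_succ', sub_self, zero_mul, zero_div] at hvanish
  simp only [one_pow, mul_one] at hvanish
  have hterm : ∀ j ∈ range (n + 1),
      (1 - z * p ^ (n + 1)) * ((-1) ^ j * p ^ (j + 1).choose 2 /
        (qPoch p p (n + 1 - j) * qPoch p p j * (1 - z * p ^ j))) =
      (-1) ^ j * p ^ (j + 1).choose 2 / (qPoch p p (n - j) * qPoch p p j * (1 - z * p ^ j)) +
        p ^ (n + 1) * ((-1) ^ j * p ^ j.choose 2 / (qPoch p p (n + 1 - j) * qPoch p p j)) := by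
    intro j hjn
    obtain ⟨k, rfl⟩ : ∃ k, n = j + k := ⟨n - j, by have := mem_range.mp hjn; omega⟩
    have hk : qPoch p p k ≠ 0 := qPoch_ne_zero_of_le hp (by omega)
    have hk' : 1 - p * p ^ k ≠ 0 := one_sub_mul_pow_ne_zero_of_qPoch hp (by omega)
    have hj : qPoch p p j ≠ 0 := qPoch_ne_zero_of_le hp (by omega)
    have hzj : 1 - z * p ^ j ≠ 0 := one_sub_mul_pow_ne_zero_of_qPoch hz (by omega)
    rw [show j + k + 1 - j = k + 1 by omega, Nat.add_sub_cancel_left, pow_choose_two_succ,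
      qPoch_succ]
    field_simp
    ring
  have hlast : (1 - z * p ^ (n + 1)) * ((-1) ^ (n + 1) * p ^ (n + 1 + 1).choose 2 /
        (qPoch p p (n + 1 - (n + 1)) * qPoch p p (n + 1) * (1 - z * p ^ (n + 1)))) =
      p ^ (n + 1) * ((-1) ^ (n + 1) * p ^ (n + 1).choose 2 /
        (qPoch p p (n + 1 - (n + 1)) * qPoch p p (n + 1))) := by
    have : 1 - z * p ^ (n + 1) ≠ 0 := one_sub_mul_pow_ne_zero_of_qPoch hz (lt_add_one _)
    rw [pow_choose_two_succ]
    field_simp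
  rw [partialFractionSum, partialFractionSum, mul_sum, sum_range_succ, sum_congr rfl hterm,
    sum_add_distrib, ← mul_sum, hlast, add_assoc, ← mul_add,
    ← sum_range_succ (fun j => (-1) ^ j * p ^ j.choose 2 / (qPoch p p (n + 1 - j) * qPoch p p j)),
    hvanish, mul_zero, add_zero]

theorem partialFractionSum_eq_inv_qPoch (p z : ℂ) {n : ℕ} (hp : qPoch p p n ≠ 0)
    (hz : qPoch z p (n + 1) ≠ 0) : partialFractionSum p z n = (qPoch z p (n + 1))⁻¹ := by
  induction n with
  | zero => simp [partialFractionSum, qPoch_succ, qPoch_zero]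
  | succ n ih =>
    have hlast : 1 - z * p ^ (n + 1) ≠ 0 := one_sub_mul_pow_ne_zero_of_qPoch hz (lt_add_one _)
    rw [← inv_mul_cancel_left₀ hlast (partialFractionSum p z (n + 1)),
      one_sub_mul_partialFractionSum_succ p z hp hz,
      ih (qPoch_ne_zero_of_le hp n.le_succ) (qPoch_ne_zero_of_le hz (n + 1).le_succ),
      qPoch_succ z p (n + 1), mul_inv, mul_comm]

theorem qPoch_neg_mul_qPoch_sq (q : ℂ) {n : ℕ} (hq : qPoch (q ^ 2) (q ^ 2) n ≠ 0) :
    qPoch (-q) q (2 * n + 1) * qPoch q (q ^ 2) (n + 1) = qPoch ((q ^ 2) ^ (n + 1)) (q ^ 2) (n + 1) := by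
  refine mul_left_cancel₀ hq ?_
  calc qPoch (q ^ 2) (q ^ 2) n * (qPoch (-q) q (2 * n + 1) * qPoch q (q ^ 2) (n + 1))
      = qPoch (-q) q (2 * n + 1) * qPoch q q (2 * n + 1) := by
        rw [qPoch_two_mul_add_one q q n, ← sq]; ring
    _ = qPoch (q ^ 2) (q ^ 2) (n + (n + 1)) := by rw [qPoch_neg_mul_qPoch]; ring_nf
    _ = qPoch (q ^ 2) (q ^ 2) n * qPoch ((q ^ 2) ^ (n + 1)) (q ^ 2) (n + 1) := by
        rw [qPoch_add, ← pow_succ']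

theorem sum_range_eq_mockF2_term {q : ℂ} (hq : ‖q‖ < 1) (n : ℕ) :
    ∑ j ∈ range (n + 1), (-1 : ℂ) ^ j * q ^ (2 * n ^ 2 + 2 * n + j ^ 2 + j) /
        (qPoch (-q) q (2 * n + 1) * qPoch (q ^ 2) (q ^ 2) (n - j) *
          qPoch (q ^ 2) (q ^ 2) j * (1 - q ^ (2 * j + 1))) =
      (q ^ 2) ^ (n ^ 2 + n) / qPoch ((q ^ 2) ^ (n + 1)) (q ^ 2) (n + 1) := by
  have hq2 : ‖q ^ 2‖ < 1 := by
    rw [norm_pow]; exact pow_lt_one₀ (norm_nonneg q) hq two_ne_zero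
  have hp : qPoch (q ^ 2) (q ^ 2) n ≠ 0 := qPoch_ne_zero hq2 hq2.le n
  calc _ = q ^ (2 * n ^ 2 + 2 * n) / qPoch (-q) q (2 * n + 1) * partialFractionSum (q ^ 2) q n := by
        rw [partialFractionSum, mul_sum]
        refine sum_congr rfl fun j _ => ?_
        rw [← pow_mul, two_mul_choose_two_succ, div_mul_div_comm]
        congr 1 <;> ring
    _ = _ := by
        rw [partialFractionSum_eq_inv_qPoch _ _ hp (qPoch_ne_zero hq hq2.le _), ← qPoch_neg_mul_qPoch_sq q hp]
        ring

theorem double_sum_mock_F2_general (q : ℂ) (h1 : ‖q‖ < 1) :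
    ∑' n : ℕ, ∑ j ∈ Finset.range (n + 1),
        (-1 : ℂ) ^ j * q ^ (2 * n ^ 2 + 2 * n + j ^ 2 + j) /
          (qPoch (-q) q (2 * n + 1) * qPoch (q ^ 2) (q ^ 2) (n - j) *
            qPoch (q ^ 2) (q ^ 2) j * (1 - q ^ (2 * j + 1))) =
      mockF2 (q ^ 2) :=
  tsum_congr (sum_range_eq_mockF2_term h1)

/-- Identity (2.14):
`Σ_{n≥0} Σ_{j=0}^{n} (-1)^j q^{2n²+2n+j²+j} / ((-q;q)_{2n+1} (q²;q²)_{n-j} (q²;q²)_j (1-q^{2j+1}))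
  = F₂(q²)`. -/
theorem double_sum_mock_F2 (q : ℂ) (h0 : 0 < ‖q‖) (h1 : ‖q‖ < 1) :
    ∑' n : ℕ, ∑ j ∈ Finset.range (n + 1),
        (-1 : ℂ) ^ j * q ^ (2 * n ^ 2 + 2 * n + j ^ 2 + j) /
          (qPoch (-q) q (2 * n + 1) * qPoch (q ^ 2) (q ^ 2) (n - j) *
            qPoch (q ^ 2) (q ^ 2) j * (1 - q ^ (2 * j + 1))) =
      mockF2 (q ^ 2) :=
  double_sum_mock_F2_general q h1
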